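/- Let Φ be an affine root system and c a Coxeter element in its Weyl group. The c-orbit of a root β ∈ Φ is finite if and only if β lies in U_c, the hyperplane spanned by the eigenvectors of c. -/

import Mathlib

open scoped BigOperators

noncomputable section

/-- A symmetrizable generalized Cartan matrix of affine type, together with the
coefficient vector `dz` of the primitive positive imaginary root `δ` spanning the
(one dimensional) kernel of the associated symmetric bilinear form. -/
structure AffineGCM (n : ℕ) where
  /-- the generalized Cartan matrix -/
  a : Matrix (Fin n) (Fin n) ℤ
  /-- symmetrizing factors -/
  d : Fin n → ℝ
  diag : ∀ i, a i i = 2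
  offdiag : ∀ i j, i ≠ j → a i j ≤ 0
  d_pos : ∀ i, 0 < d i
  symmetrizable : ∀ i j, d i * (a i j : ℝ) = d j * (a j i : ℝ)
  /-- `K` is positive semidefinite (on the real span of the simple roots) -/
  posSemidef : ∀ g : Fin n → ℝ, 0 ≤ ∑ i, ∑ j, g i * g j * (d i * (a i j : ℝ))
  /-- `K` is not positive definite -/
  not_posDef : ∃ g : Fin n → ℝ, g ≠ 0 ∧ ∑ i, ∑ j, g i * g j * (d i * (a i j : ℝ)) = 0
  /-- the restriction of `K` to the span of every proper subset of the simple roots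
  is positive definite -/
  proper_posDef : ∀ J : Finset (Fin n), J ≠ Finset.univ →
    ∀ g : Fin n → ℝ, (∀ i, i ∉ J → g i = 0) → g ≠ 0 →
      0 < ∑ i, ∑ j, g i * g j * (d i * (a i j : ℝ))
  /-- coordinates of the positive imaginary root `δ` in the basis of simple roots -/
  dz : Fin n → ℤ
  dz_pos : ∀ i, 0 < dz i
  /-- `δ` is the imaginary root closest to the origin: its coordinates are coprime -/
  dz_prim : Finset.univ.gcd dz = 1
  /-- `δ` spans the kernel of `K` -/
  dz_ker : ∀ j, ∑ i, (dz i : ℝ) * (d i * (a i j : ℝ)) = 0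

namespace AffineGCM

variable {n : ℕ}

/-- The ambient vector space `V`, with the simple roots as standard basis. -/
abbrev V (n : ℕ) := Fin n → ℂ

/-- the simple root `α i` (the `i`-th standard basis vector) -/
def α (i : Fin n) : V n := Pi.single i 1

/-- a vector is *positive* if it lies in the nonnegative real span of the simple roots -/
def IsPosRoot (v : V n) : Prop := ∀ i, 0 ≤ (v i).re ∧ (v i).im = 0

/-- a vector is *negative* if it lies in the nonpositive real span of the simple roots -/
def IsNegRoot (v : V n) : Prop := ∀ i, (v i).re ≤ 0 ∧ (v i).im = 0

/-- the `g`-orbit of `x`: all `g ^ k • x` for integers `k` -/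
def orbit (g : V n ≃ₗ[ℂ] V n) (x : V n) : Set (V n) := Set.range fun k : ℤ => (g ^ k) x

/-- `U g`: the span of all eigenvectors of `g`, i.e. the direct sum of its eigenspaces -/
def eigSpan (g : V n ≃ₗ[ℂ] V n) : Submodule ℂ (V n) :=
  ⨆ μ : ℂ, Module.End.eigenspace (g : Module.End ℂ (V n)) μ

/-- the span `V_fin` of the simple roots other than `α aff` -/
def Vfin (aff : Fin n) : Submodule ℂ (V n) :=
  Submodule.span ℂ (α '' {i : Fin n | i ≠ aff})

variable (C : AffineGCM n)

/-- the simple coroot `α i ^ ∨ = (d i)⁻¹ • α i` -/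
def coroot (i : Fin n) : V n := ((C.d i : ℂ))⁻¹ • α i

/-- The symmetric bilinear form `K`, determined by `K (coroot i) (α j) = a i j`,
that is, `K (α i) (α j) = d i * a i j`. -/
def K : V n →ₗ[ℂ] V n →ₗ[ℂ] ℂ :=
  LinearMap.mk₂ ℂ
    (fun x y => ∑ i, ∑ j, x i * y j * ((C.d i : ℂ) * (C.a i j : ℂ)))
    (fun x x' y => by
      simp only [Pi.add_apply, add_mul, Finset.sum_add_distrib])
    (fun r x y => by
      simp only [Pi.smul_apply, smul_eq_mul, Finset.mul_sum]
      exact Finset.sum_congr rfl fun i _ => Finset.sum_congr rfl fun j _ => by ring)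
    (fun x y y' => by
      simp only [Pi.add_apply, mul_add, add_mul, Finset.sum_add_distrib])
    (fun r x y => by
      simp only [Pi.smul_apply, smul_eq_mul, Finset.mul_sum]
      exact Finset.sum_congr rfl fun i _ => Finset.sum_congr rfl fun j _ => by ring)

/-- the linear map `v ↦ v - K x v • y`; reflections are special cases -/
def reflMap (x y : V n) : V n →ₗ[ℂ] V n where
  toFun v := v - C.K x v • y
  map_add' u v := by simp only [map_add, add_smul]; abel
  map_smul' r u := by simp only [map_smul, smul_eq_mul, RingHom.id_apply, smul_sub, smul_smul]

lemma reflMap_apply (x y v : V n) : C.reflMap x y v = v - C.K x v • y := rfl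

/-- the simple reflection `s i` as a linear endomorphism -/
def sLin (i : Fin n) : V n →ₗ[ℂ] V n := C.reflMap (C.coroot i) (α i)

lemma K_α_α (i j : Fin n) : C.K (α i) (α j) = (C.d i : ℂ) * (C.a i j : ℂ) := by
  simp [K, α, LinearMap.mk₂_apply, Pi.single_apply, ite_mul, zero_mul,
    Finset.sum_ite_eq', Finset.mem_univ]

lemma K_coroot_α (i j : Fin n) : C.K (C.coroot i) (α j) = (C.a i j : ℂ) := by
  have hd : (C.d i : ℂ) ≠ 0 := by exact_mod_cast ne_of_gt (C.d_pos i)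
  simp only [coroot, map_smul, LinearMap.smul_apply, smul_eq_mul, K_α_α]
  field_simp

lemma sLin_invol (i : Fin n) (v : V n) : C.sLin i (C.sLin i v) = v := by
  have h2 : C.K (C.coroot i) (α i) = 2 := by
    rw [K_coroot_α, C.diag]; norm_num
  simp only [sLin, reflMap_apply, map_sub, map_smul, h2, smul_eq_mul]
  module

/-- the simple reflection `s i` -/
def s (i : Fin n) : V n ≃ₗ[ℂ] V n :=
  LinearEquiv.ofLinear (C.sLin i) (C.sLin i)
    (LinearMap.ext fun v => C.sLin_invol i v) (LinearMap.ext fun v => C.sLin_invol i v)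

/-- the Weyl group `W`, as a subgroup of the group of linear automorphisms of `V` -/
def Wgroup : Subgroup (V n ≃ₗ[ℂ] V n) := Subgroup.closure (Set.range C.s)

/-- the Coxeter element `c = s 1 * s 2 * ⋯ * s n` -/
def cox : V n ≃ₗ[ℂ] V n := (List.ofFn C.s).prod

/-- the positive imaginary root `δ` -/
def δv : V n := fun i => ((C.dz i : ℤ) : ℂ)

/-- the set of real roots: `W`-images of the simple roots -/
def realRoots : Set (V n) := {v | ∃ w ∈ C.Wgroup, ∃ i, w (α i) = v}

/-- the root system `Φ`: real roots together with the imaginary roots `k • δ`, `k ≠ 0` -/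
def Φ : Set (V n) := C.realRoots ∪ {v | ∃ k : ℤ, k ≠ 0 ∧ v = (k : ℂ) • C.δv}

/-- `T→ = {α 1, s 1 α 2, …, s 1 ⋯ s (n-1) α n}` -/
def Tproj : Set (V n) :=
  Set.range fun k : Fin n => ((List.ofFn C.s).take k.val).prod (α k)

/-- `T← = {α n, s n α (n-1), …, s n ⋯ s 2 α 1}` -/
def Tinj : Set (V n) :=
  Set.range fun k : Fin n => ((List.ofFn C.s).reverse.take (n - 1 - k.val)).prod (α k)

/-- `Φ_fin`, the finite root system `Φ ∩ V_fin` -/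
def Φfin (aff : Fin n) : Set (V n) := C.Φ ∩ (Vfin aff : Set (V n))

/-- the root `θ = δ - [δ : α aff] • α aff` of `Φ_fin` -/
def θv (aff : Fin n) : V n := C.δv - ((C.dz aff : ℤ) : ℂ) • α aff

/-- the reflection `t β : v ↦ v - K (β^∨) v • β` in a (real) root `β`,
where `β^∨ = (2 / K β β) • β` -/
def tRefl (β : V n) : V n →ₗ[ℂ] V n := C.reflMap ((2 / C.K β β) • β) β

/-- `c_◁ = s 1 * ⋯ * s (aff - 1)` -/
def cleft (aff : Fin n) : V n →ₗ[ℂ] V n := ((List.ofFn C.sLin).take aff.val).prod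

/-- `c_▷ = s (aff + 1) * ⋯ * s n` -/
def cright (aff : Fin n) : V n →ₗ[ℂ] V n := ((List.ofFn C.sLin).drop (aff.val + 1)).prod

/-- `Υ^fin = Φ_fin ∩ U c` -/
def Υfin (aff : Fin n) : Set (V n) := C.Φfin aff ∩ (eigSpan C.cox : Set (V n))

/-- `B` is a simple system for a set `Θ` of roots: a linearly independent subset of `Θ`
such that every element of `Θ` is a nonnegative or a nonpositive combination of `B`. -/
def IsSimpleSystem (Θ : Set (V n)) (B : Finset (V n)) : Prop :=
  ↑B ⊆ Θ ∧ LinearIndependent ℂ (fun b : B => (b : V n)) ∧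
    ∀ v ∈ Θ, ∃ g : V n → ℝ, ((∀ b ∈ B, 0 ≤ g b) ∨ (∀ b ∈ B, g b ≤ 0)) ∧
      v = ∑ b ∈ B, (g b : ℂ) • b

/-- two roots of `Θ` are connected if they are joined by a chain of roots of `Θ`
that are pairwise non-orthogonal (with respect to `K`) -/
def Connected (Θ : Set (V n)) (x y : V n) : Prop :=
  Relation.ReflTransGen (fun u v => u ∈ Θ ∧ v ∈ Θ ∧ C.K u v ≠ 0) x y

/-- the irreducible component of `x` in `Θ` -/
def component (Θ : Set (V n)) (x : V n) : Set (V n) := {y | y ∈ Θ ∧ C.Connected Θ x y}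

/-- a set of roots is of finite type `A` if it consists exactly of the vectors
`±(β i + β (i+1) + ⋯ + β j)` for a linearly independent family `β 1, …, β k` -/
def IsTypeA (Θ : Set (V n)) : Prop :=
  ∃ (k : ℕ) (β : Fin k → V n), LinearIndependent ℂ β ∧ (∀ i, β i ∈ Θ) ∧
    Θ = {v | ∃ i j : Fin k, i ≤ j ∧
      (v = ∑ l ∈ Finset.Icc i j, β l ∨ v = -∑ l ∈ Finset.Icc i j, β l)}

/-- `Ω = {β 1, t (β 1) (β 2), …, t (β 1) ⋯ t (β (m-1)) (β m)}` for an ordered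
tuple `β` of roots -/
def Ωset {m : ℕ} (β : Fin m → V n) : Set (V n) :=
  Set.range fun j : Fin m => (((List.ofFn fun i => C.tRefl (β i)).take j.val).prod) (β j)

/-- `s i` is initial in a Coxeter element `c` if `c` is the product of a permutation
of all the simple reflections starting with `s i` -/
def IsInitial (i : Fin n) (c : V n ≃ₗ[ℂ] V n) : Prop :=
  ∃ l : List (Fin n), (i :: l).Perm (List.finRange n) ∧ ((i :: l).map C.s).prod = c

/-- `s i` is final in a Coxeter element `c` if `c` is the product of a permutation
of all the simple reflections ending with `s i` -/
def IsFinal (i : Fin n) (c : V n ≃ₗ[ℂ] V n) : Prop :=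
  ∃ l : List (Fin n), (l ++ [i]).Perm (List.finRange n) ∧ ((l ++ [i]).map C.s).prod = c

/-- the skew-symmetric bilinear form `ω_c`, determined by
`ω_c (coroot i) (α j) = a i j` if `i > j`, `= 0` if `i = j`, `= -a i j` if `i < j` -/
def ω : V n →ₗ[ℂ] V n →ₗ[ℂ] ℂ :=
  LinearMap.mk₂ ℂ
    (fun x y => ∑ i, ∑ j, x i * y j *
      ((if j < i then 1 else if i = j then 0 else -1) * ((C.d i : ℂ) * (C.a i j : ℂ))))
    (fun x x' y => by
      simp only [Pi.add_apply, add_mul, Finset.sum_add_distrib])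
    (fun r x y => by
      simp only [Pi.smul_apply, smul_eq_mul, Finset.mul_sum]
      exact Finset.sum_congr rfl fun i _ => Finset.sum_congr rfl fun j _ => by ring)
    (fun x y y' => by
      simp only [Pi.add_apply, mul_add, add_mul, Finset.sum_add_distrib])
    (fun r x y => by
      simp only [Pi.smul_apply, smul_eq_mul, Finset.mul_sum]
      exact Finset.sum_congr rfl fun i _ => Finset.sum_congr rfl fun j _ => by ring)

end AffineGCM

/-!
Since `δ` spans the radical of `K` and is fixed by `c`, the Coxeter element acts on `V / ℂδ`
preserving both the image of the lattice `ℤⁿ` and the form induced by `K`, which is positive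
definite there. Such an automorphism has finite order, so some power `c ^ N` is the identity
plus a map into `ℂδ`.

A vector has finite `c`-orbit iff it is fixed by some `c ^ M` with `M > 0`. Such a vector is a
sum of eigenvectors of `c` by a discrete Fourier transform over the `M`-th roots of unity.
Conversely every eigenvector of `c` is fixed by `c ^ N`: otherwise it would lie in `ℂδ`, which
`c` fixes.
-/

theorem finite_range_zpow_smul_iff {G X : Type*} [Group G] [MulAction G X] (g : G) (x : X) :
    (Set.range fun k : ℤ => g ^ k • x).Finite ↔ ∃ N : ℕ, 0 < N ∧ g ^ N • x = x := by
  constructor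
  · intro hfin
    have : Finite (Set.range fun k : ℤ => g ^ k • x) := hfin
    obtain ⟨a, b, hab, he⟩ :=
      Finite.exists_ne_map_eq_of_infinite (Set.rangeFactorization fun k : ℤ => g ^ k • x)
    have hfix : g ^ (a - b) ∈ MulAction.stabilizer G x := by
      have he' : g ^ a • x = g ^ b • x := congrArg Subtype.val he
      rw [MulAction.mem_stabilizer_iff, sub_eq_neg_add, zpow_add, mul_smul, he', zpow_neg,
        inv_smul_smul]
    refine ⟨(a - b).natAbs, Int.natAbs_pos.mpr (sub_ne_zero.mpr hab), ?_⟩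
    rw [← MulAction.mem_stabilizer_iff, ← zpow_natCast]
    rcases Int.natAbs_eq (a - b) with h | h
    · rwa [← h]
    · rw [← neg_neg ((a - b).natAbs : ℤ), ← h, zpow_neg]; exact inv_mem hfix
  · rintro ⟨N, hN, hx⟩
    refine ((Set.finite_Ico (0 : ℤ) N).image fun k : ℤ => g ^ k • x).subset ?_
    rintro _ ⟨k, rfl⟩
    have hfix : (g ^ (N : ℤ)) ^ (k / N) ∈ MulAction.stabilizer G x :=
      zpow_mem (by rwa [zpow_natCast]) _
    refine ⟨k % N, ⟨Int.emod_nonneg k (by omega), Int.emod_lt_of_pos k (by omega)⟩, ?_⟩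
    dsimp only
    conv_rhs => rw [← Int.emod_add_mul_ediv k N]
    rw [zpow_add, zpow_mul, mul_smul, MulAction.mem_stabilizer_iff.mp hfix]

section Fourier

variable {K V : Type*} [Field K] [AddCommGroup V] [Module K V]

theorem Module.End.smul_apply_sum_pow_smul_pow_apply {f : Module.End K V} {N : ℕ} {v : V}
    (hv : (f ^ N) v = v) {μ : K} (hμ : μ ^ N = 1) :
    μ • f (∑ j ∈ Finset.range N, μ ^ j • (f ^ j) v) =
      ∑ j ∈ Finset.range N, μ ^ j • (f ^ j) v := by
  have hshift := (Finset.sum_range_succ' (fun j => μ ^ j • (f ^ j) v) N).symm.trans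
    (Finset.sum_range_succ (fun j => μ ^ j • (f ^ j) v) N)
  simp only [hμ, hv, pow_zero, one_smul, Module.End.one_apply, add_left_inj] at hshift
  rw [map_sum, Finset.smul_sum, ← hshift]
  refine Finset.sum_congr rfl fun j _ => ?_
  rw [map_smul, smul_smul, ← pow_succ', pow_succ' f j, Module.End.mul_apply]

theorem Module.End.mem_iSup_eigenspace_of_pow_apply_eq_self {f : Module.End K V} {N : ℕ}
    {ζ : K} (hζ : IsPrimitiveRoot ζ N) (hN : (N : K) ≠ 0) {v : V} (hv : (f ^ N) v = v) :
    v ∈ ⨆ μ, f.eigenspace μ := by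
  have hN0 : N ≠ 0 := by rintro rfl; simp at hN
  have hroot : ∀ k, (ζ ^ k) ^ N = 1 := fun k => by
    rw [← pow_mul, mul_comm, pow_mul, hζ.pow_eq_one, one_pow]
  set w : K → V := fun μ => ∑ j ∈ Finset.range N, μ ^ j • (f ^ j) v
  have hw_mem : ∀ k, w (ζ ^ k) ∈ ⨆ μ, f.eigenspace μ := fun k => by
    have hμ0 : ζ ^ k ≠ 0 := pow_ne_zero k (hζ.ne_zero hN0)
    refine Submodule.mem_iSup_of_mem (ζ ^ k)⁻¹ (Module.End.mem_eigenspace_iff.mpr ?_)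
    rw [eq_inv_smul_iff₀ hμ0]
    exact Module.End.smul_apply_sum_pow_smul_pow_apply hv (hroot k)
  have hsum : ∑ k ∈ Finset.range N, w (ζ ^ k) = (N : K) • v := by
    simp only [w]
    rw [Finset.sum_comm]
    simp_rw [← pow_mul, mul_comm _ (_ : ℕ), pow_mul, ← Finset.sum_smul]
    rw [Finset.sum_eq_single 0]
    · simp
    · intro j hj hj0
      have hne : ζ ^ j ≠ 1 := hζ.pow_ne_one_of_pos_of_lt hj0 (Finset.mem_range.mp hj)
      rw [geom_sum_eq hne, hroot, sub_self, zero_div, zero_smul]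
    · exact fun h => absurd (Finset.mem_range.mpr (Nat.pos_of_ne_zero hN0)) h
  have := Submodule.smul_mem _ (N : K)⁻¹ (hsum ▸ Submodule.sum_mem _ fun k _ => hw_mem k)
  rwa [inv_smul_smul₀ hN] at this

theorem Module.End.pow_apply_of_apply_eq_smul {f : Module.End K V} {μ : K} {v : V}
    (hv : f v = μ • v) (m : ℕ) : (f ^ m) v = μ ^ m • v := by
  induction m with
  | zero => simp
  | succ m ih => rw [pow_succ', Module.End.mul_apply, ih, map_smul, hv, smul_smul, pow_succ]

theorem Module.End.iSup_eigenspace_le_eigenspace_pow_one {f : Module.End K V} {δ : V}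
    (hδ : f δ = δ) {N : ℕ} (hN : ∀ v, (f ^ N) v - v ∈ K ∙ δ) :
    ⨆ μ, f.eigenspace μ ≤ (f ^ N).eigenspace 1 := by
  refine iSup_le fun μ v hv => ?_
  rw [Module.End.mem_eigenspace_iff] at hv ⊢
  have hpow := Module.End.pow_apply_of_apply_eq_smul hv N
  by_cases hμ : μ ^ N = 1
  · rw [hpow, hμ]
  have hvδ : v ∈ K ∙ δ := by
    have : (μ ^ N - 1) • v ∈ K ∙ δ := by rw [sub_smul, one_smul, ← hpow]; exact hN v
    rwa [Submodule.smul_mem_iff _ (sub_ne_zero.mpr hμ)] at this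
  obtain ⟨t, rfl⟩ := Submodule.mem_span_singleton.mp hvδ
  rw [one_smul, map_smul, Module.End.pow_apply, Function.iterate_fixed hδ]

end Fourier

theorem exists_pos_mul_sq_norm_le {E : Type*} [NormedAddCommGroup E] [NormedSpace ℝ E]
    [ProperSpace E] {q : E → ℝ} (hq : Continuous q) (hsmul : ∀ (c : ℝ) y, q (c • y) = c ^ 2 * q y)
    (hpos : ∀ y, y ≠ 0 → 0 < q y) : ∃ m > 0, ∀ y, m * ‖y‖ ^ 2 ≤ q y := by
  have hunit : ∀ {y : E}, y ≠ 0 → ‖y‖⁻¹ • y ∈ Metric.sphere (0 : E) 1 := fun hy => by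
    simp [norm_smul, hy]
  have hscale : ∀ y : E, q y = ‖y‖ ^ 2 * q (‖y‖⁻¹ • y) := fun y => by
    rcases eq_or_ne y 0 with rfl | hy
    · simpa using hsmul 0 0
    · rw [hsmul, ← mul_assoc, ← mul_pow, mul_inv_cancel₀ (norm_ne_zero_iff.mpr hy), one_pow,
        one_mul]
  rcases (Metric.sphere (0 : E) 1).eq_empty_or_nonempty with hS | hS
  · refine ⟨1, one_pos, fun y => ?_⟩
    have hy : y = 0 := by_contra fun hy => hS.subset (hunit hy)
    rw [hscale y, hy, norm_zero]
    simp
  · obtain ⟨y₀, hy₀, hmin⟩ := (isCompact_sphere (0 : E) 1).exists_isMinOn hS hq.continuousOn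
    refine ⟨q y₀, hpos y₀ (Metric.ne_of_mem_sphere hy₀ one_ne_zero), fun y => ?_⟩
    rw [hscale y, mul_comm]
    rcases eq_or_ne y 0 with rfl | hy
    · simp
    · exact mul_le_mul_of_nonneg_left (hmin (hunit hy)) (by positivity)

theorem finite_setOf_int_le {ι : Type*} [Fintype ι] {q : (ι → ℝ) → ℝ} (hq : Continuous q)
    (hsmul : ∀ (c : ℝ) y, q (c • y) = c ^ 2 * q y) (hpos : ∀ y, y ≠ 0 → 0 < q y) (B : ℝ) :
    {z : ι → ℤ | q (fun i => z i) ≤ B}.Finite := by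
  obtain ⟨m, hm, hle⟩ := exists_pos_mul_sq_norm_le hq hsmul hpos
  refine (isCompact_closedBall (0 : ι → ℤ) √(B / m)).finite_of_discrete.subset fun z hz => ?_
  rw [mem_closedBall_zero_iff, pi_norm_le_iff_of_nonneg (Real.sqrt_nonneg _)]
  intro i
  rw [← Int.norm_cast_real]
  refine (norm_le_pi_norm (fun i => (z i : ℝ)) i).trans
    (Real.le_sqrt_of_sq_le ((le_div_iff₀ hm).mpr ?_))
  linarith [hle (fun i => (z i : ℝ)), hz.out]

theorem LinearEquiv.coe_pow_apply {R M : Type*} [Semiring R] [AddCommMonoid M] [Module R M]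
    (e : M ≃ₗ[R] M) (N : ℕ) (v : M) : ((e : Module.End R M) ^ N) v = (e ^ N) v := by
  rw [Module.End.pow_apply, LinearEquiv.pow_apply]
  rfl

namespace AffineGCM

variable {n : ℕ} (C : AffineGCM n)

lemma K_apply (x y : V n) :
    C.K x y = ∑ i, ∑ j, x i * y j * ((C.d i : ℂ) * (C.a i j : ℂ)) := rfl

lemma K_comm (x y : V n) : C.K x y = C.K y x := by
  rw [K_apply, K_apply, Finset.sum_comm]
  refine Finset.sum_congr rfl fun j _ => Finset.sum_congr rfl fun i _ => ?_
  have h : (C.d i : ℂ) * (C.a i j : ℂ) = (C.d j : ℂ) * (C.a j i : ℂ) := by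
    exact_mod_cast C.symmetrizable i j
  rw [h]; ring

lemma K_δv_left (x : V n) : C.K C.δv x = 0 := by
  rw [K_apply, Finset.sum_comm]
  refine Finset.sum_eq_zero fun j _ => ?_
  have h : ∑ i, (C.dz i : ℂ) * ((C.d i : ℂ) * (C.a i j : ℂ)) = 0 := by
    exact_mod_cast C.dz_ker j
  simp only [δv, mul_right_comm _ (x j), ← Finset.sum_mul, h, zero_mul]

lemma K_δv_right (x : V n) : C.K x C.δv = 0 := by
  rw [K_comm, K_δv_left]

lemma K_coroot_apply (i : Fin n) (v : V n) : C.K (C.coroot i) v = ∑ j, v j * C.a i j := by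
  have hd : (C.d i : ℂ) ≠ 0 := by exact_mod_cast (C.d_pos i).ne'
  simp only [coroot, α, map_smul, LinearMap.smul_apply, K_apply, Pi.single_apply, ite_mul,
    one_mul, zero_mul, Finset.sum_ite_irrel, Finset.sum_const_zero, Finset.sum_ite_eq',
    Finset.mem_univ, ↓reduceIte, smul_eq_mul, Finset.mul_sum]
  exact Finset.sum_congr rfl fun j _ => by field_simp

lemma s_apply (i : Fin n) (v : V n) : C.s i v = v - C.K (C.coroot i) v • α i := rfl

lemma s_δv (i : Fin n) : C.s i C.δv = C.δv := by
  rw [s_apply, K_comm, coroot, map_smul, K_δv_left, smul_zero, zero_smul, sub_zero]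

lemma isOrthogonal_s (i : Fin n) : C.K.IsOrthogonal (C.s i) := by
  intro x y
  have hd : (C.d i : ℂ) ≠ 0 := by exact_mod_cast (C.d_pos i).ne'
  have hαα : C.K (α i) (α i) = 2 * (C.d i : ℂ) := by rw [K_α_α, C.diag]; push_cast; ring
  simp only [s_apply, coroot, map_sub, map_smul, LinearMap.sub_apply, LinearMap.smul_apply,
    smul_eq_mul, hαα, K_comm C x (α i)]
  field_simp
  ring

def intLattice : Set (V n) := Set.range fun (z : Fin n → ℤ) i => (z i : ℂ)

lemma mapsTo_s_intLattice (i : Fin n) : Set.MapsTo (C.s i) intLattice intLattice := by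
  rintro _ ⟨z, rfl⟩
  refine ⟨fun k => z k - (∑ j, z j * C.a i j) * if k = i then 1 else 0, funext fun k => ?_⟩
  rw [s_apply, K_coroot_apply]
  by_cases hk : k = i <;> simp [α, hk]

lemma cox_mem {S : Submonoid (V n ≃ₗ[ℂ] V n)} (h : ∀ i, C.s i ∈ S) : C.cox ∈ S :=
  S.list_prod_mem fun _ hg => by
    obtain ⟨i, rfl⟩ := List.mem_ofFn.mp hg
    exact h i

def isometries : Submonoid (V n ≃ₗ[ℂ] V n) where
  carrier := {g | C.K.IsOrthogonal g}
  mul_mem' hf hg x y := (hf _ _).trans (hg x y)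
  one_mem' _ _ := rfl

def intLatticeStab : Submonoid (V n ≃ₗ[ℂ] V n) where
  carrier := {g | Set.MapsTo g intLattice intLattice}
  mul_mem' hf hg := hf.comp hg
  one_mem' := Set.mapsTo_id _

lemma cox_δv : C.cox C.δv = C.δv :=
  C.cox_mem (S := (MulAction.stabilizer _ C.δv).toSubmonoid) C.s_δv

lemma pow_cox_δv (k : ℕ) : (C.cox ^ k) C.δv = C.δv := by
  rw [LinearEquiv.pow_apply, Function.iterate_fixed C.cox_δv]

lemma isOrthogonal_pow_cox (k : ℕ) : C.K.IsOrthogonal ⇑(C.cox ^ k) :=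
  pow_mem (C.cox_mem (S := C.isometries) C.isOrthogonal_s) k

lemma mapsTo_pow_cox_intLattice (k : ℕ) : Set.MapsTo ⇑(C.cox ^ k) intLattice intLattice :=
  pow_mem (C.cox_mem (S := intLatticeStab) C.mapsTo_s_intLattice) k

def Q (y : Fin n → ℝ) : ℝ := ∑ i, ∑ j, y i * y j * (C.d i * C.a i j)

lemma K_intCast_self (z : Fin n → ℤ) :
    C.K (fun i => (z i : ℂ)) (fun i => (z i : ℂ)) = C.Q fun i => z i := by
  simp [K_apply, Q]

lemma Q_smul (c : ℝ) (y : Fin n → ℝ) : C.Q (c • y) = c ^ 2 * C.Q y := by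
  simp only [Q, Pi.smul_apply, smul_eq_mul, Finset.mul_sum]
  exact Finset.sum_congr rfl fun i _ => Finset.sum_congr rfl fun j _ => by ring

lemma continuous_Q : Continuous C.Q := by
  unfold Q; fun_prop

lemma Q_add_sq_pos (i₀ : Fin n) {y : Fin n → ℝ} (hy : y ≠ 0) : 0 < C.Q y + y i₀ ^ 2 := by
  by_cases h : y i₀ = 0
  · have hJ : Finset.univ.erase i₀ ≠ Finset.univ := fun hJ =>
      Finset.notMem_erase i₀ _ (hJ ▸ Finset.mem_univ i₀)
    have := C.proper_posDef _ hJ y (fun i hi => by simp_all) hy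
    exact add_pos_of_pos_of_nonneg this (sq_nonneg _)
  · exact add_pos_of_nonneg_of_pos (C.posSemidef y) (by positivity)

lemma finite_intLattice_K_self_eq (i₀ : Fin n) (b : ℂ) :
    {v | v ∈ intLattice ∧ v i₀ = 0 ∧ C.K v v = b}.Finite := by
  have hfin := finite_setOf_int_le (q := fun y => C.Q y + y i₀ ^ 2)
    (C.continuous_Q.add (by fun_prop)) (fun c y => by simp only [Q_smul, Pi.smul_apply, smul_eq_mul]; ring)
    (fun y hy => C.Q_add_sq_pos i₀ hy) b.re
  refine (hfin.image fun (z : Fin n → ℤ) i => (z i : ℂ)).subset ?_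
  rintro _ ⟨⟨z, rfl⟩, hz₀, hK⟩
  have hz₀ : z i₀ = 0 := Int.cast_eq_zero.mp hz₀
  refine ⟨z, (le_of_eq ?_ : _ ≤ b.re), rfl⟩
  simp [hz₀, ← hK, K_intCast_self]

/-- Projection along `δ`, scaled by `[δ : α i₀]` so that it preserves integrality. -/
def elimδ (i₀ : Fin n) : V n →ₗ[ℂ] V n :=
  (C.dz i₀ : ℂ) • LinearMap.id - (LinearMap.proj i₀).smulRight C.δv

lemma elimδ_apply (i₀ : Fin n) (v : V n) : C.elimδ i₀ v = (C.dz i₀ : ℂ) • v - v i₀ • C.δv := rfl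

lemma elimδ_apply_apply_self (i₀ : Fin n) (v : V n) : C.elimδ i₀ v i₀ = 0 := by
  simp [elimδ_apply, δv, mul_comm]

lemma K_elimδ_self (i₀ : Fin n) (v : V n) :
    C.K (C.elimδ i₀ v) (C.elimδ i₀ v) = (C.dz i₀ : ℂ) ^ 2 * C.K v v := by
  simp only [elimδ_apply, map_sub, map_smul, LinearMap.sub_apply, LinearMap.smul_apply,
    smul_eq_mul, K_δv_left, K_δv_right, mul_zero, sub_zero]
  ring

lemma mapsTo_elimδ_intLattice (i₀ : Fin n) : Set.MapsTo (C.elimδ i₀) intLattice intLattice := by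
  rintro _ ⟨z, rfl⟩
  exact ⟨fun k => C.dz i₀ * z k - z i₀ * C.dz k, funext fun k => by simp [elimδ_apply, δv]⟩

lemma ker_elimδ_le (i₀ : Fin n) : LinearMap.ker (C.elimδ i₀) ≤ ℂ ∙ C.δv := fun v hv => by
  have hdz : (C.dz i₀ : ℂ) ≠ 0 := by exact_mod_cast (C.dz_pos i₀).ne'
  rw [LinearMap.mem_ker, elimδ_apply, sub_eq_zero] at hv
  refine Submodule.mem_span_singleton.mpr ⟨(C.dz i₀ : ℂ)⁻¹ * v i₀, ?_⟩
  rw [mul_smul, ← hv, inv_smul_smul₀ hdz]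

lemma α_mem_intLattice (j : Fin n) : α j ∈ (intLattice : Set (V n)) :=
  ⟨Pi.single j 1, funext fun i => by by_cases h : i = j <;> simp [α, h]⟩

lemma pow_cox_sub_apply_sub_mem_span {k l : ℕ} (hkl : k ≤ l) {x : V n}
    (h : (C.cox ^ l) x - (C.cox ^ k) x ∈ ℂ ∙ C.δv) : (C.cox ^ (l - k)) x - x ∈ ℂ ∙ C.δv := by
  obtain ⟨t, ht⟩ := Submodule.mem_span_singleton.mp h
  refine Submodule.mem_span_singleton.mpr ⟨t, (C.cox ^ k).injective ?_⟩
  rw [map_smul, pow_cox_δv, ht, map_sub, ← LinearEquiv.mul_apply, ← pow_add,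
    Nat.add_sub_cancel' hkl]

/-- `elimδ i₀` sends the `c`-orbit of `α j` into a finite set (integer vectors with vanishing
`i₀`-coordinate and fixed `K`-length, on which `K` is definite), so by pigeonhole two powers of `c`
agree on all `α j` modulo `δ`. -/
lemma exists_pow_cox_apply_α_sub_mem_span :
    ∃ N : ℕ, 0 < N ∧ ∀ j, (C.cox ^ N) (α j) - α j ∈ ℂ ∙ C.δv := by
  obtain ⟨g, hg, -⟩ := C.not_posDef
  obtain ⟨i₀, -⟩ := Function.ne_iff.mp hg
  set S : Fin n → Set (V n) := fun j =>
    {v | v ∈ intLattice ∧ v i₀ = 0 ∧ C.K v v = (C.dz i₀ : ℂ) ^ 2 * C.K (α j) (α j)}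
  have hmaps : Set.MapsTo (fun k : ℕ => fun j => C.elimδ i₀ ((C.cox ^ k) (α j))) Set.univ
      (Set.univ.pi S) := fun k _ j _ =>
    ⟨C.mapsTo_elimδ_intLattice i₀ (C.mapsTo_pow_cox_intLattice k (α_mem_intLattice j)),
      C.elimδ_apply_apply_self i₀ _, by rw [K_elimδ_self, isOrthogonal_pow_cox]⟩
  obtain ⟨k, -, l, -, hkl, heq⟩ := Set.infinite_univ.exists_lt_map_eq_of_mapsTo hmaps
    (Set.Finite.pi fun j => C.finite_intLattice_K_self_eq i₀ _)
  refine ⟨l - k, by omega, fun j => C.pow_cox_sub_apply_sub_mem_span hkl.le ?_⟩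
  exact C.ker_elimδ_le i₀ (LinearMap.sub_mem_ker_iff.mpr (congrFun heq j).symm)

lemma exists_pow_cox_sub_mem_span :
    ∃ N : ℕ, 0 < N ∧ ∀ v, (C.cox ^ N) v - v ∈ ℂ ∙ C.δv := by
  obtain ⟨N, hN, hα⟩ := C.exists_pow_cox_apply_α_sub_mem_span
  refine ⟨N, hN, fun v => ?_⟩
  have : ⊤ ≤ (ℂ ∙ C.δv).comap (((C.cox ^ N : V n ≃ₗ[ℂ] V n) : V n →ₗ[ℂ] V n) - 1) := by
    rw [← (Pi.basisFun ℂ (Fin n)).span_eq, Submodule.span_le]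
    rintro _ ⟨j, rfl⟩
    rw [SetLike.mem_coe, Submodule.mem_comap, Pi.basisFun_apply]
    exact hα j
  exact this Submodule.mem_top

/-- Theorem 1.2(2): the `c`-orbit of a root `β` is finite iff `β ∈ U c`. -/
theorem finite_orbit_iff_mem_eigSpan {n : ℕ} (C : AffineGCM n) :
    ∀ β ∈ C.Φ, (orbit C.cox β).Finite ↔ β ∈ eigSpan C.cox := by
  intro β _
  change (Set.range fun k : ℤ => C.cox ^ k • β).Finite ↔ _
  rw [finite_range_zpow_smul_iff]
  constructor
  · rintro ⟨N, hN, hβ⟩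
    refine Module.End.mem_iSup_eigenspace_of_pow_apply_eq_self
      (Complex.isPrimitiveRoot_exp N hN.ne') (Nat.cast_ne_zero.mpr hN.ne') ?_
    rwa [LinearEquiv.coe_pow_apply]
  · intro hβ
    obtain ⟨N, hN, hδ⟩ := C.exists_pow_cox_sub_mem_span
    have := Module.End.iSup_eigenspace_le_eigenspace_pow_one
      (f := (C.cox : Module.End ℂ (V n))) C.cox_δv
      (fun v => by rw [LinearEquiv.coe_pow_apply]; exact hδ v) hβ
    rw [Module.End.mem_eigenspace_iff, LinearEquiv.coe_pow_apply, one_smul] at this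
    exact ⟨N, hN, this⟩

end AffineGCM
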